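/- In the constrained saddle-point setting, run OpConEx with X := W and the operator F(w) := (∇_u f(u,v), −∇_v f(u,v)) for T ≥ 1 iterations, with step sizes satisfying condition (C). Then: (i) for every w ∈ W̃, G(w̄^T; w) ≤ (1/Γ_T)[(γ₀η₀/2)‖w−w⁰‖² + M_T(0)]; and (ii) ‖[g(w̄^T)]_+‖ ≤ (1/Γ_T)[(γ₀η₀/2)‖w*−w⁰‖² + (γ₀τ₀/2)(‖λ*‖+1)² + M_T(‖λ*‖+1)]. -/

import Mathlib

/-!
Each OpConEx iteration is a pair of prox steps, so the three-point inequality bounds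
`⟪F(w^{t+1}), w^{t+1} - z⟫ + ⟪λ, g(w^{t+1})⟫ - ⟪λ^{t+1}, g(z)⟫` by differences of squared
distances, differences of extrapolation terms and the local terms of `M_T(a)`; replacing the
linearisation `ℓ_g(w^{t+1})` by `g(w^{t+1})` costs `a (L_g/2 ‖·‖² + H_g ‖·‖)` when `‖λ‖ ≤ a`.
Weighted by `γ_t`, condition (C) makes the distances telescope and the extrapolation terms cancel
in pairs; the last one is absorbed by Young's inequality. Convexity at the ergodic average
`w̄^T` turns the weighted sum into a bound at `w̄^T`: with `λ = 0` and a feasible `z` this is the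
gap bound (i). For (ii) take `z = w*` and `λ = λ* + ρ`, where `ρ ≥ 0` is the unit vector along
`[g(w̄^T)]₊`: the KKT saddle inequality absorbs everything except `⟪ρ, g(w̄^T)⟫ = ‖[g(w̄^T)]₊‖`.
-/

open scoped InnerProductSpace BigOperators

noncomputable section

/-- ℝ^k with the Euclidean norm. -/
abbrev Euc (k : ℕ) := EuclideanSpace ℝ (Fin k)

/-- `∇g(x)ᵀ d`, where `G j` is the j-th column of `∇g(x)`. -/
def gradT {m : ℕ} {E : Type*} [NormedAddCommGroup E] [InnerProductSpace ℝ E]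
    (G : Fin m → E) (d : E) : Euc m :=
  (EuclideanSpace.equiv (Fin m) ℝ).symm fun j => ⟪G j, d⟫_ℝ

/-- `∇g(x) μ`, where `G j` is the j-th column of `∇g(x)`. -/
def gradMul {m : ℕ} {E : Type*} [NormedAddCommGroup E] [InnerProductSpace ℝ E]
    (G : Fin m → E) (μ : Euc m) : E :=
  ∑ j, μ j • G j

/-- componentwise positive part `[v]₊`. -/
def posPart {m : ℕ} (v : Euc m) : Euc m :=
  (EuclideanSpace.equiv (Fin m) ℝ).symm fun j => max (v j) 0

/-- The quantity `M_T(a)` of the OpConEx method (over a general inner product space). -/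
def opconexMT {m : ℕ} {E : Type*} [NormedAddCommGroup E] [InnerProductSpace ℝ E]
    (γ η τ θ : ℕ → ℝ) (Lg Hg : ℝ)
    (F : E → E) (x xm : ℕ → E) (lam : ℕ → Euc m)
    (ell ellm : ℕ → Euc m) (T : ℕ) (a : ℝ) : ℝ :=
  (∑ t ∈ Finset.range T,
      (γ t * θ t * ⟪F (x t) - F (xm t), x t - x (t + 1)⟫_ℝ
        + γ t * θ t * ⟪ell t - ellm t, lam (t + 1) - lam t⟫_ℝ
        - γ t * (η t - Lg * a) / 2 * ‖x (t + 1) - x t‖ ^ 2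
        - γ t * τ t / 2 * ‖lam t - lam (t + 1)‖ ^ 2
        + a * Hg * γ t * ‖x (t + 1) - x t‖))
    + γ (T - 1) / (2 * η (T - 1)) * ‖F (x T) - F (xm T)‖ ^ 2
    + γ (T - 1) / (2 * τ (T - 1)) * ‖ell T - ellm T‖ ^ 2

open Finset

section InnerProductSpace

variable {E : Type*} [NormedAddCommGroup E] [InnerProductSpace ℝ E]

/-- The three-point inequality of a prox step, from the first-order optimality condition. -/
theorem inner_sub_le_of_isMinOn {S : Set E} (hS : Convex ℝ S) {p x₀ x₁ : E} {η : ℝ}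
    (hx₁ : x₁ ∈ S) (hmin : IsMinOn (fun y => ⟪p, y⟫_ℝ + η / 2 * ‖y - x₀‖ ^ 2) S x₁)
    {y : E} (hy : y ∈ S) :
    ⟪p, x₁ - y⟫_ℝ ≤ η / 2 * (‖y - x₀‖ ^ 2 - ‖y - x₁‖ ^ 2 - ‖x₁ - x₀‖ ^ 2) := by
  have hderiv := ((innerSL ℝ p).hasFDerivAt (x := x₁)).add
    (((hasFDerivAt_id x₁).sub_const x₀).norm_sq.const_mul (η / 2))
  have hfermat := hmin.localize.hasFDerivWithinAt_nonneg hderiv.hasFDerivWithinAt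
    (sub_mem_posTangentConeAt_of_segment_subset (hS.segment_subset hx₁ hy))
  have hsplit : ‖y - x₀‖ ^ 2 = ‖y - x₁‖ ^ 2 + 2 * ⟪y - x₁, x₁ - x₀⟫_ℝ + ‖x₁ - x₀‖ ^ 2 := by
    rw [← norm_add_sq_real, sub_add_sub_cancel]
  simp only [id_eq, ContinuousLinearMap.comp_id, add_apply, coe_innerSL_apply, smul_apply,
    nsmul_eq_mul, Nat.cast_ofNat, smul_eq_mul] at hfermat
  rw [← neg_sub y x₁, inner_neg_right, hsplit, real_inner_comm (x₁ - x₀)]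
  linarith

theorem mul_inner_le_young (a b : E) {c η : ℝ} (hc : 0 ≤ c) (hη : 0 < η) :
    c * ⟪a, b⟫_ℝ ≤ c * η / 2 * ‖b‖ ^ 2 + c / (2 * η) * ‖a‖ ^ 2 := by
  have hsq : η / 2 * ‖b‖ ^ 2 + ‖a‖ ^ 2 / (2 * η) - ‖a‖ * ‖b‖
      = (‖a‖ - η * ‖b‖) ^ 2 / (2 * η) := by
    field_simp
    ring
  have hyoung : ⟪a, b⟫_ℝ ≤ η / 2 * ‖b‖ ^ 2 + ‖a‖ ^ 2 / (2 * η) := by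
    have : 0 ≤ (‖a‖ - η * ‖b‖) ^ 2 / (2 * η) := by positivity
    linarith [real_inner_le_norm a b]
  calc c * ⟪a, b⟫_ℝ ≤ c * (η / 2 * ‖b‖ ^ 2 + ‖a‖ ^ 2 / (2 * η)) :=
        mul_le_mul_of_nonneg_left hyoung hc
    _ = c * η / 2 * ‖b‖ ^ 2 + c / (2 * η) * ‖a‖ ^ 2 := by ring

theorem inner_le_inner_add_mul_of_norm_sub_le {μ u v : E} {a b : ℝ} (ha : ‖μ‖ ≤ a)
    (hb : ‖u - v‖ ≤ b) : ⟪μ, u⟫_ℝ ≤ ⟪μ, v⟫_ℝ + a * b := by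
  have := (real_inner_le_norm μ (u - v)).trans
    (mul_le_mul ha hb (norm_nonneg _) ((norm_nonneg μ).trans ha))
  rw [inner_sub_right] at this
  linarith

theorem sum_smul_sub_centerMass {ι : Type*} {s : Finset ι} {γ : ι → ℝ} (hΓ : ∑ i ∈ s, γ i ≠ 0)
    (x : ι → E) : ∑ i ∈ s, γ i • (x i - s.centerMass γ x) = 0 := by
  simp only [smul_sub, sum_sub_distrib, ← sum_smul, centerMass, smul_inv_smul₀ hΓ, sub_self]

theorem sum_mul_map_centerMass_le_of_subgradient {ι : Type*} {s : Finset ι} {γ : ι → ℝ}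
    (hγ : ∀ i ∈ s, 0 ≤ γ i) (hΓ : ∑ i ∈ s, γ i ≠ 0) {x : ι → E} {φ : E → ℝ} {v : E}
    (hφ : ∀ i ∈ s, φ (s.centerMass γ x) + ⟪v, x i - s.centerMass γ x⟫_ℝ ≤ φ (x i)) :
    (∑ i ∈ s, γ i) * φ (s.centerMass γ x) ≤ ∑ i ∈ s, γ i * φ (x i) := by
  have hzero : ∑ i ∈ s, γ i * ⟪v, x i - s.centerMass γ x⟫_ℝ = 0 := by
    simp_rw [← real_inner_smul_right, ← inner_sum, sum_smul_sub_centerMass hΓ, inner_zero_right]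
  calc (∑ i ∈ s, γ i) * φ (s.centerMass γ x)
      = ∑ i ∈ s, γ i * (φ (s.centerMass γ x) + ⟪v, x i - s.centerMass γ x⟫_ℝ) := by
        rw [sum_mul, ← add_zero (∑ i ∈ s, _), ← hzero, ← sum_add_distrib]
        simp only [mul_add]
    _ ≤ ∑ i ∈ s, γ i * φ (x i) :=
        sum_le_sum fun i hi => mul_le_mul_of_nonneg_left (hφ i hi) (hγ i hi)

end InnerProductSpace

theorem sum_range_mul_sub_mul_succ_le {e D : ℕ → ℝ} (he : Antitone e) (hD : ∀ t, 0 ≤ D t)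
    (T : ℕ) : ∑ t ∈ range T, (e t * D t - e t * D (t + 1)) ≤ e 0 * D 0 - e (T - 1) * D T := by
  induction T with
  | zero => simp
  | succ T ih =>
    rw [sum_range_succ, Nat.add_sub_cancel]
    have := mul_le_mul_of_nonneg_right (he (Nat.sub_le T 1)) (hD T)
    linarith

section Euclidean

variable {m : ℕ}

theorem inner_euc_eq_sum (x y : Euc m) : ⟪x, y⟫_ℝ = ∑ j, x j * y j := by
  simp [PiLp.inner_apply, mul_comm]

theorem posPart_apply (v : Euc m) (j : Fin m) : posPart v j = max (v j) 0 := rfl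

theorem convex_setOf_forall_nonneg : Convex ℝ {μ : Euc m | ∀ j, 0 ≤ μ j} := by
  intro x hx y hy a b ha hb _ j
  simpa using add_nonneg (mul_nonneg ha (hx j)) (mul_nonneg hb (hy j))

theorem inner_nonpos_of_nonneg_of_nonpos {μ v : Euc m} (hμ : ∀ j, 0 ≤ μ j)
    (hv : ∀ j, v j ≤ 0) : ⟪μ, v⟫_ℝ ≤ 0 := by
  rw [inner_euc_eq_sum]
  exact sum_nonpos fun j _ => mul_nonpos_of_nonneg_of_nonpos (hμ j) (hv j)

theorem inner_posPart_self (v : Euc m) : ⟪posPart v, v⟫_ℝ = ‖posPart v‖ ^ 2 := by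
  rw [← real_inner_self_eq_norm_sq, inner_euc_eq_sum, inner_euc_eq_sum]
  refine sum_congr rfl fun j _ => ?_
  rcases le_total (v j) 0 with h | h <;> simp [posPart_apply, h]

/-- The witness is `‖[v]₊‖⁻¹ • [v]₊`; as `0⁻¹ = 0`, it is `0` when `[v]₊ = 0`. -/
theorem exists_nonneg_norm_le_one_inner_eq_norm_posPart (v : Euc m) :
    ∃ ρ : Euc m, (∀ j, 0 ≤ ρ j) ∧ ‖ρ‖ ≤ 1 ∧ ⟪ρ, v⟫_ℝ = ‖posPart v‖ := by
  refine ⟨‖posPart v‖⁻¹ • posPart v, fun j => ?_, ?_, ?_⟩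
  · exact mul_nonneg (inv_nonneg.2 (norm_nonneg _)) (le_max_right _ _)
  · rw [norm_smul, norm_inv, norm_norm]
    exact inv_mul_le_one_of_le₀ le_rfl (norm_nonneg _)
  · rw [real_inner_smul_left, inner_posPart_self]
    rcases eq_or_ne ‖posPart v‖ 0 with h | h
    · simp [h]
    · field_simp

variable {E : Type*} [NormedAddCommGroup E] [InnerProductSpace ℝ E]

theorem inner_gradMul (G : Fin m → E) (μ : Euc m) (d : E) :
    ⟪gradMul G μ, d⟫_ℝ = ⟪μ, gradT G d⟫_ℝ := by
  simp [gradMul, gradT, inner_euc_eq_sum, sum_inner, real_inner_smul_left]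

theorem gradT_sub (G : Fin m → E) (d d' : E) :
    gradT G (d - d') = gradT G d - gradT G d' := by
  ext j
  simp [gradT, inner_sub_right]

theorem inner_add_inner_gradMul_le {X : Set E} {g : E → Euc m} {Gg : E → Fin m → E}
    (hgconv : ∀ w ∈ X, ∀ w' ∈ X, ∀ j, g w j + ⟪Gg w j, w' - w⟫_ℝ ≤ g w' j)
    {μ : Euc m} (hμ : ∀ j, 0 ≤ μ j) {w w' : E} (hw : w ∈ X) (hw' : w' ∈ X) :
    ⟪μ, g w⟫_ℝ + ⟪gradMul (Gg w) μ, w' - w⟫_ℝ ≤ ⟪μ, g w'⟫_ℝ := by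
  rw [inner_gradMul, inner_euc_eq_sum, inner_euc_eq_sum, inner_euc_eq_sum, ← sum_add_distrib]
  refine sum_le_sum fun j _ => ?_
  rw [← mul_add]
  exact mul_le_mul_of_nonneg_left (hgconv w hw w' hw' j) (hμ j)

/-- For a KKT pair, monotonicity of `F` lets `F w` replace `F w⋆` in the saddle inequality. -/
theorem lagrangian_gap_nonneg {X : Set E} {F : E → E} {g : E → Euc m}
    (hFmono : ∀ w₁ ∈ X, ∀ w₂ ∈ X, 0 ≤ ⟪F w₁ - F w₂, w₁ - w₂⟫_ℝ)
    {wstar : E} {lamstar : Euc m} (hwstar : wstar ∈ X)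
    (hsaddle₁ : ∀ w ∈ X,
      ⟪F wstar, wstar⟫_ℝ + ⟪lamstar, g wstar⟫_ℝ ≤ ⟪F wstar, w⟫_ℝ + ⟪lamstar, g w⟫_ℝ)
    (hsaddle₂ : ∀ lam' : Euc m, (∀ j, 0 ≤ lam' j) →
      ⟪lam', g wstar⟫_ℝ ≤ ⟪lamstar, g wstar⟫_ℝ)
    {w : E} (hw : w ∈ X) {μ : Euc m} (hμ : ∀ j, 0 ≤ μ j) :
    0 ≤ ⟪F w, w - wstar⟫_ℝ + ⟪lamstar, g w⟫_ℝ - ⟪μ, g wstar⟫_ℝ := by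
  have hmono := hFmono w hw wstar hwstar
  have h₁ := hsaddle₁ w hw
  have h₂ := hsaddle₂ μ hμ
  simp only [inner_sub_left, inner_sub_right] at hmono ⊢
  linarith

end Euclidean

section ConvexConcave

variable {E₁ E₂ : Type*} [NormedAddCommGroup E₁] [InnerProductSpace ℝ E₁]
  [NormedAddCommGroup E₂] [InnerProductSpace ℝ E₂]
  {U : Set E₁} {V : Set E₂} {f : E₁ → E₂ → ℝ} {Fu : E₁ → E₂ → E₁} {Fv : E₁ → E₂ → E₂}

theorem sub_le_inner_sub_inner_of_convex_concave
    (hfconv : ∀ v ∈ V, ∀ u ∈ U, ∀ u' ∈ U, f u v + ⟪Fu u v, u' - u⟫_ℝ ≤ f u' v)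
    (hfconc : ∀ u ∈ U, ∀ v ∈ V, ∀ v' ∈ V, f u v' ≤ f u v + ⟪Fv u v, v' - v⟫_ℝ)
    {u u' : E₁} {v v' : E₂} (hu : u ∈ U) (hu' : u' ∈ U) (hv : v ∈ V) (hv' : v' ∈ V) :
    f u v' - f u' v ≤ ⟪Fu u v, u - u'⟫_ℝ - ⟪Fv u v, v - v'⟫_ℝ := by
  have h₁ := hfconv v hv u hu u' hu'
  have h₂ := hfconc u hu v hv v' hv'
  rw [← neg_sub u, inner_neg_right] at h₁
  rw [← neg_sub v, inner_neg_right] at h₂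
  linarith

theorem ofLp_fst_centerMass {ι : Type*} (s : Finset ι) (γ : ι → ℝ)
    (x : ι → WithLp 2 (E₁ × E₂)) :
    (s.centerMass γ x).ofLp.1 = s.centerMass γ fun i => (x i).ofLp.1 := by
  simp [centerMass, Prod.fst_sum]

theorem ofLp_snd_centerMass {ι : Type*} (s : Finset ι) (γ : ι → ℝ)
    (x : ι → WithLp 2 (E₁ × E₂)) :
    (s.centerMass γ x).ofLp.2 = s.centerMass γ fun i => (x i).ofLp.2 := by
  simp [centerMass, Prod.snd_sum]

theorem sum_mul_gap_centerMass_le (hUconv : Convex ℝ U) (hVconv : Convex ℝ V)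
    (hfconv : ∀ v ∈ V, ∀ u ∈ U, ∀ u' ∈ U, f u v + ⟪Fu u v, u' - u⟫_ℝ ≤ f u' v)
    (hfconc : ∀ u ∈ U, ∀ v ∈ V, ∀ v' ∈ V, f u v' ≤ f u v + ⟪Fv u v, v' - v⟫_ℝ)
    {F : WithLp 2 (E₁ × E₂) → WithLp 2 (E₁ × E₂)}
    (hF : ∀ w, F w =
      (WithLp.equiv 2 (E₁ × E₂)).symm (Fu w.ofLp.1 w.ofLp.2, -Fv w.ofLp.1 w.ofLp.2))
    {ι : Type*} {s : Finset ι} {γ : ι → ℝ} (hγ : ∀ i ∈ s, 0 ≤ γ i) (hΓ : 0 < ∑ i ∈ s, γ i)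
    {x : ι → WithLp 2 (E₁ × E₂)} (hxU : ∀ i ∈ s, (x i).ofLp.1 ∈ U)
    (hxV : ∀ i ∈ s, (x i).ofLp.2 ∈ V) {z : WithLp 2 (E₁ × E₂)} (hzU : z.ofLp.1 ∈ U)
    (hzV : z.ofLp.2 ∈ V) :
    (∑ i ∈ s, γ i)
        * (f (s.centerMass γ x).ofLp.1 z.ofLp.2 - f z.ofLp.1 (s.centerMass γ x).ofLp.2)
      ≤ ∑ i ∈ s, γ i * ⟪F (x i), x i - z⟫_ℝ := by
  set xbar := s.centerMass γ x
  have hxbarU : xbar.ofLp.1 ∈ U := by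
    rw [ofLp_fst_centerMass]
    exact hUconv.centerMass_mem hγ hΓ hxU
  have hxbarV : xbar.ofLp.2 ∈ V := by
    rw [ofLp_snd_centerMass]
    exact hVconv.centerMass_mem hγ hΓ hxV
  calc (∑ i ∈ s, γ i) * (f xbar.ofLp.1 z.ofLp.2 - f z.ofLp.1 xbar.ofLp.2)
      ≤ ∑ i ∈ s, γ i * (f (x i).ofLp.1 z.ofLp.2 - f z.ofLp.1 (x i).ofLp.2) := by
        refine sum_mul_map_centerMass_le_of_subgradient hγ hΓ.ne'
          (φ := fun w => f w.ofLp.1 z.ofLp.2 - f z.ofLp.1 w.ofLp.2)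
          (v := (WithLp.equiv 2 (E₁ × E₂)).symm
            (Fu xbar.ofLp.1 z.ofLp.2, -Fv z.ofLp.1 xbar.ofLp.2)) fun i hi => ?_
        have h₁ := hfconv _ hzV _ hxbarU _ (hxU i hi)
        have h₂ := hfconc _ hzU _ hxbarV _ (hxV i hi)
        simp only [WithLp.equiv_symm_apply, WithLp.prod_inner_apply, WithLp.ofLp_sub,
          Prod.fst_sub, Prod.snd_sub, inner_neg_left]
        linarith
    _ ≤ ∑ i ∈ s, γ i * ⟪F (x i), x i - z⟫_ℝ := by
        refine sum_le_sum fun i hi => mul_le_mul_of_nonneg_left ?_ (hγ i hi)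
        rw [hF, WithLp.prod_inner_apply]
        simpa only [WithLp.equiv_symm_apply, WithLp.ofLp_sub, Prod.fst_sub, Prod.snd_sub,
          inner_neg_left, sub_neg_eq_add, ← sub_eq_add_neg] using
          sub_le_inner_sub_inner_of_convex_concave hfconv hfconc (hxU i hi) hzU (hxV i hi) hzV

end ConvexConcave

section OpConEx

variable {E : Type*} [NormedAddCommGroup E] [InnerProductSpace ℝ E] {m : ℕ}

/-- `xm t`, `ell t`, `ellm t` stand for `x^{t-1}`, `ℓ_g(x^t)`, `ℓ_g(x^{t-1})`, where
`x^{-1} = x^0`. -/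
structure IsOpConExRun (X : Set E) (F : E → E) (g : E → Euc m) (Gg : E → Fin m → E)
    (η τ θ : ℕ → ℝ) (x xm : ℕ → E) (lam ell ellm : ℕ → Euc m) : Prop where
  mem : ∀ t, x t ∈ X
  xm_zero : xm 0 = x 0
  xm_succ : ∀ t, xm (t + 1) = x t
  lam_zero : lam 0 = 0
  ell_zero : ell 0 = g (x 0)
  ell_succ : ∀ t, ell (t + 1) = g (x t) + gradT (Gg (x t)) (x (t + 1) - x t)
  ellm_zero : ellm 0 = g (x 0)
  ellm_succ : ∀ t, ellm (t + 1) = ell t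
  lam_nonneg : ∀ t, ∀ j, 0 ≤ lam (t + 1) j
  lam_min : ∀ t, IsMinOn (fun lam' => ⟪-((1 + θ t) • ell t - θ t • ellm t), lam'⟫_ℝ
    + τ t / 2 * ‖lam' - lam t‖ ^ 2) {μ : Euc m | ∀ j, 0 ≤ μ j} (lam (t + 1))
  x_min : ∀ t, IsMinOn (fun y => ⟪(1 + θ t) • F (x t) - θ t • F (xm t)
    + gradMul (Gg (x t)) (lam (t + 1)), y⟫_ℝ + η t / 2 * ‖y - x t‖ ^ 2) X (x (t + 1))

namespace IsOpConExRun

variable {X : Set E} {F : E → E} {g : E → Euc m} {Gg : E → Fin m → E} {γ η τ θ : ℕ → ℝ}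
  {x xm : ℕ → E} {lam ell ellm : ℕ → Euc m} {Lg Hg : ℝ}

theorem step (run : IsOpConExRun X F g Gg η τ θ x xm lam ell ellm) (hX : Convex ℝ X)
    (hgconv : ∀ w ∈ X, ∀ w' ∈ X, ∀ j, g w j + ⟪Gg w j, w' - w⟫_ℝ ≤ g w' j)
    (hgsmooth : ∀ w₁ ∈ X, ∀ w₂ ∈ X,
      ‖g w₁ - g w₂ - gradT (Gg w₂) (w₁ - w₂)‖ ≤ Lg / 2 * ‖w₁ - w₂‖ ^ 2 + Hg * ‖w₁ - w₂‖)
    {z : E} (hz : z ∈ X) {μ : Euc m} (hμ : ∀ j, 0 ≤ μ j) {a : ℝ} (ha : ‖μ‖ ≤ a) (t : ℕ) :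
    ⟪F (x (t + 1)), x (t + 1) - z⟫_ℝ + ⟪μ, g (x (t + 1))⟫_ℝ - ⟪lam (t + 1), g z⟫_ℝ
      ≤ η t / 2 * (‖z - x t‖ ^ 2 - ‖z - x (t + 1)‖ ^ 2)
        + τ t / 2 * (‖μ - lam t‖ ^ 2 - ‖μ - lam (t + 1)‖ ^ 2)
        + (⟪F (x (t + 1)) - F (xm (t + 1)), x (t + 1) - z⟫_ℝ
          - θ t * ⟪F (x t) - F (xm t), x t - z⟫_ℝ)
        + (⟪ell (t + 1) - ellm (t + 1), μ - lam (t + 1)⟫_ℝ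
          - θ t * ⟪ell t - ellm t, μ - lam t⟫_ℝ)
        + (θ t * ⟪F (x t) - F (xm t), x t - x (t + 1)⟫_ℝ
          + θ t * ⟪ell t - ellm t, lam (t + 1) - lam t⟫_ℝ
          - (η t - Lg * a) / 2 * ‖x (t + 1) - x t‖ ^ 2
          - τ t / 2 * ‖lam t - lam (t + 1)‖ ^ 2
          + a * Hg * ‖x (t + 1) - x t‖) := by
  have hprimal := inner_sub_le_of_isMinOn hX (run.mem (t + 1)) (run.x_min t) hz
  have hdual := inner_sub_le_of_isMinOn convex_setOf_forall_nonneg (run.lam_nonneg t)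
    (run.lam_min t) hμ
  have hlin := inner_add_inner_gradMul_le hgconv (run.lam_nonneg t) (run.mem t) hz
  have hsmooth := hgsmooth _ (run.mem (t + 1)) _ (run.mem t)
  rw [sub_sub, ← run.ell_succ] at hsmooth
  have herr := inner_le_inner_add_mul_of_norm_sub_le ha hsmooth
  rw [run.xm_succ, run.ellm_succ, norm_sub_rev (lam t)]
  rw [run.ell_succ] at herr ⊢
  simp only [inner_add_left, inner_add_right, inner_sub_left, inner_sub_right, inner_neg_left,
    real_inner_smul_left, inner_gradMul, gradT_sub] at hprimal hdual hlin herr ⊢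
  simp only [real_inner_comm] at hprimal hdual hlin herr ⊢
  linarith

theorem sum_le (run : IsOpConExRun X F g Gg η τ θ x xm lam ell ellm) (hX : Convex ℝ X)
    (hgconv : ∀ w ∈ X, ∀ w' ∈ X, ∀ j, g w j + ⟪Gg w j, w' - w⟫_ℝ ≤ g w' j)
    (hgsmooth : ∀ w₁ ∈ X, ∀ w₂ ∈ X,
      ‖g w₁ - g w₂ - gradT (Gg w₂) (w₁ - w₂)‖ ≤ Lg / 2 * ‖w₁ - w₂‖ ^ 2 + Hg * ‖w₁ - w₂‖)
    (hγ : ∀ t, 0 ≤ γ t) (hη : ∀ t, 0 < η t) (hτ : ∀ t, 0 < τ t)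
    (hC₁ : ∀ t, γ (t + 1) * η (t + 1) ≤ γ t * η t)
    (hC₂ : ∀ t, γ (t + 1) * τ (t + 1) ≤ γ t * τ t)
    (hC₃ : ∀ t, γ (t + 1) * θ (t + 1) = γ t)
    {T : ℕ} (hT : T ≠ 0) {z : E} (hz : z ∈ X) {μ : Euc m} (hμ : ∀ j, 0 ≤ μ j) {a : ℝ}
    (ha : ‖μ‖ ≤ a) :
    ∑ t ∈ range T, γ t * (⟪F (x (t + 1)), x (t + 1) - z⟫_ℝ + ⟪μ, g (x (t + 1))⟫_ℝ
        - ⟪lam (t + 1), g z⟫_ℝ)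
      ≤ γ 0 * η 0 / 2 * ‖z - x 0‖ ^ 2 + γ 0 * τ 0 / 2 * ‖μ‖ ^ 2
        + opconexMT γ η τ θ Lg Hg F x xm lam ell ellm T a := by
  -- By `hC₃`, the extrapolation terms of consecutive steps telescope through `cF` and `cq`.
  set cF : ℕ → ℝ := fun t => γ t * θ t * ⟪F (x t) - F (xm t), x t - z⟫_ℝ
  set cq : ℕ → ℝ := fun t => γ t * θ t * ⟪ell t - ellm t, μ - lam t⟫_ℝ
  have hstep : ∀ t ∈ range T,
      γ t * (⟪F (x (t + 1)), x (t + 1) - z⟫_ℝ + ⟪μ, g (x (t + 1))⟫_ℝ - ⟪lam (t + 1), g z⟫_ℝ)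
        ≤ (γ t * η t / 2 * ‖z - x t‖ ^ 2 - γ t * η t / 2 * ‖z - x (t + 1)‖ ^ 2)
          + (γ t * τ t / 2 * ‖μ - lam t‖ ^ 2 - γ t * τ t / 2 * ‖μ - lam (t + 1)‖ ^ 2)
          + (cF (t + 1) - cF t) + (cq (t + 1) - cq t)
          + (γ t * θ t * ⟪F (x t) - F (xm t), x t - x (t + 1)⟫_ℝ
            + γ t * θ t * ⟪ell t - ellm t, lam (t + 1) - lam t⟫_ℝ
            - γ t * (η t - Lg * a) / 2 * ‖x (t + 1) - x t‖ ^ 2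
            - γ t * τ t / 2 * ‖lam t - lam (t + 1)‖ ^ 2
            + a * Hg * γ t * ‖x (t + 1) - x t‖) := by
    intro t _
    have h := mul_le_mul_of_nonneg_left (run.step hX hgconv hgsmooth hz hμ ha t) (hγ t)
    simp only [cF, cq, hC₃ t]
    linarith
  have hsum := sum_le_sum hstep
  rw [sum_add_distrib, sum_add_distrib, sum_add_distrib, sum_add_distrib, sum_range_sub,
    sum_range_sub] at hsum
  have hη_tele := sum_range_mul_sub_mul_succ_le (e := fun t => γ t * η t / 2)
    (D := fun t => ‖z - x t‖ ^ 2) (antitone_nat_of_succ_le fun t => by linarith [hC₁ t])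
    (fun t => by positivity) T
  have hτ_tele := sum_range_mul_sub_mul_succ_le (e := fun t => γ t * τ t / 2)
    (D := fun t => ‖μ - lam t‖ ^ 2) (antitone_nat_of_succ_le fun t => by linarith [hC₂ t])
    (fun t => by positivity) T
  obtain ⟨T, rfl⟩ := Nat.exists_eq_add_one_of_ne_zero hT
  have hcF : cF (T + 1) ≤ γ T * η T / 2 * ‖z - x (T + 1)‖ ^ 2
      + γ T / (2 * η T) * ‖F (x (T + 1)) - F (xm (T + 1))‖ ^ 2 := by
    simp only [cF, hC₃ T]
    rw [norm_sub_rev z]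
    exact mul_inner_le_young _ _ (hγ T) (hη T)
  have hcq : cq (T + 1) ≤ γ T * τ T / 2 * ‖μ - lam (T + 1)‖ ^ 2
      + γ T / (2 * τ T) * ‖ell (T + 1) - ellm (T + 1)‖ ^ 2 := by
    simp only [cq, hC₃ T]
    exact mul_inner_le_young _ _ (hγ T) (hτ T)
  simp only [cF, cq, run.xm_zero, run.ell_zero, run.ellm_zero, run.lam_zero, sub_self,
    inner_zero_left, mul_zero, sub_zero, Nat.add_sub_cancel] at hsum hη_tele hτ_tele hcF hcq
  unfold opconexMT
  simp only [Nat.add_sub_cancel]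
  linarith

theorem sum_inner_le_of_feasible (run : IsOpConExRun X F g Gg η τ θ x xm lam ell ellm)
    (hX : Convex ℝ X) (hgconv : ∀ w ∈ X, ∀ w' ∈ X, ∀ j, g w j + ⟪Gg w j, w' - w⟫_ℝ ≤ g w' j)
    (hgsmooth : ∀ w₁ ∈ X, ∀ w₂ ∈ X,
      ‖g w₁ - g w₂ - gradT (Gg w₂) (w₁ - w₂)‖ ≤ Lg / 2 * ‖w₁ - w₂‖ ^ 2 + Hg * ‖w₁ - w₂‖)
    (hγ : ∀ t, 0 ≤ γ t) (hη : ∀ t, 0 < η t) (hτ : ∀ t, 0 < τ t)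
    (hC₁ : ∀ t, γ (t + 1) * η (t + 1) ≤ γ t * η t)
    (hC₂ : ∀ t, γ (t + 1) * τ (t + 1) ≤ γ t * τ t)
    (hC₃ : ∀ t, γ (t + 1) * θ (t + 1) = γ t)
    {T : ℕ} (hT : T ≠ 0) {z : E} (hz : z ∈ X) (hgz : ∀ j, g z j ≤ 0) :
    ∑ t ∈ range T, γ t * ⟪F (x (t + 1)), x (t + 1) - z⟫_ℝ
      ≤ γ 0 * η 0 / 2 * ‖z - x 0‖ ^ 2 + opconexMT γ η τ θ Lg Hg F x xm lam ell ellm T 0 := by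
  have hbound := run.sum_le hX hgconv hgsmooth hγ hη hτ hC₁ hC₂ hC₃ hT hz (μ := 0)
    (fun _ => le_rfl) norm_zero.le
  have hfeas : ∀ t ∈ range T, γ t * ⟪F (x (t + 1)), x (t + 1) - z⟫_ℝ
      ≤ γ t * (⟪F (x (t + 1)), x (t + 1) - z⟫_ℝ + ⟪(0 : Euc m), g (x (t + 1))⟫_ℝ
        - ⟪lam (t + 1), g z⟫_ℝ) := fun t _ =>
    mul_le_mul_of_nonneg_left (by
      rw [inner_zero_left, add_zero, le_sub_self_iff]
      exact inner_nonpos_of_nonneg_of_nonpos (run.lam_nonneg t) hgz) (hγ t)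
  rw [norm_zero, zero_pow two_ne_zero, mul_zero, add_zero] at hbound
  exact (sum_le_sum hfeas).trans hbound

theorem mul_norm_posPart_centerMass_le (run : IsOpConExRun X F g Gg η τ θ x xm lam ell ellm)
    (hX : Convex ℝ X) (hgconv : ∀ w ∈ X, ∀ w' ∈ X, ∀ j, g w j + ⟪Gg w j, w' - w⟫_ℝ ≤ g w' j)
    (hgsmooth : ∀ w₁ ∈ X, ∀ w₂ ∈ X,
      ‖g w₁ - g w₂ - gradT (Gg w₂) (w₁ - w₂)‖ ≤ Lg / 2 * ‖w₁ - w₂‖ ^ 2 + Hg * ‖w₁ - w₂‖)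
    (hγ : ∀ t, 0 ≤ γ t) (hη : ∀ t, 0 < η t) (hτ : ∀ t, 0 < τ t)
    (hC₁ : ∀ t, γ (t + 1) * η (t + 1) ≤ γ t * η t)
    (hC₂ : ∀ t, γ (t + 1) * τ (t + 1) ≤ γ t * τ t)
    (hC₃ : ∀ t, γ (t + 1) * θ (t + 1) = γ t)
    (hFmono : ∀ w₁ ∈ X, ∀ w₂ ∈ X, 0 ≤ ⟪F w₁ - F w₂, w₁ - w₂⟫_ℝ)
    {wstar : E} {lamstar : Euc m} (hwstar : wstar ∈ X) (hlamstar : ∀ j, 0 ≤ lamstar j)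
    (hsaddle₁ : ∀ w ∈ X,
      ⟪F wstar, wstar⟫_ℝ + ⟪lamstar, g wstar⟫_ℝ ≤ ⟪F wstar, w⟫_ℝ + ⟪lamstar, g w⟫_ℝ)
    (hsaddle₂ : ∀ lam' : Euc m, (∀ j, 0 ≤ lam' j) → ⟪lam', g wstar⟫_ℝ ≤ ⟪lamstar, g wstar⟫_ℝ)
    {T : ℕ} (hΓ : 0 < ∑ t ∈ range T, γ t) :
    (∑ t ∈ range T, γ t) * ‖posPart (g ((range T).centerMass γ fun t => x (t + 1)))‖
      ≤ γ 0 * η 0 / 2 * ‖wstar - x 0‖ ^ 2 + γ 0 * τ 0 / 2 * (‖lamstar‖ + 1) ^ 2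
        + opconexMT γ η τ θ Lg Hg F x xm lam ell ellm T (‖lamstar‖ + 1) := by
  set xbar := (range T).centerMass γ fun t => x (t + 1)
  have hT : T ≠ 0 := by
    rintro rfl
    simp at hΓ
  have hxbar : xbar ∈ X := hX.centerMass_mem (fun t _ => hγ t) hΓ fun t _ => run.mem (t + 1)
  obtain ⟨ρ, hρ, hρ_norm, hρ_inner⟩ := exists_nonneg_norm_le_one_inner_eq_norm_posPart (g xbar)
  have hμ : ∀ j, 0 ≤ (lamstar + ρ) j := fun j => add_nonneg (hlamstar j) (hρ j)
  have hμ_norm : ‖lamstar + ρ‖ ≤ ‖lamstar‖ + 1 := (norm_add_le _ _).trans (by linarith)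
  have hjensen :
      (∑ t ∈ range T, γ t) * ⟪ρ, g xbar⟫_ℝ ≤ ∑ t ∈ range T, γ t * ⟪ρ, g (x (t + 1))⟫_ℝ :=
    sum_mul_map_centerMass_le_of_subgradient (fun t _ => hγ t) hΓ.ne'
      (φ := fun w => ⟪ρ, g w⟫_ℝ)
      fun t _ => inner_add_inner_gradMul_le hgconv hρ hxbar (run.mem (t + 1))
  have hkkt : ∀ t ∈ range T, γ t * ⟪ρ, g (x (t + 1))⟫_ℝ
      ≤ γ t * (⟪F (x (t + 1)), x (t + 1) - wstar⟫_ℝ + ⟪lamstar + ρ, g (x (t + 1))⟫_ℝ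
        - ⟪lam (t + 1), g wstar⟫_ℝ) := by
    intro t _
    refine mul_le_mul_of_nonneg_left ?_ (hγ t)
    have := lagrangian_gap_nonneg hFmono hwstar hsaddle₁ hsaddle₂ (run.mem (t + 1))
      (run.lam_nonneg t)
    rw [inner_add_left]
    linarith
  have hbound := run.sum_le hX hgconv hgsmooth hγ hη hτ hC₁ hC₂ hC₃ hT hwstar hμ hμ_norm
  have hsq : γ 0 * τ 0 / 2 * ‖lamstar + ρ‖ ^ 2 ≤ γ 0 * τ 0 / 2 * (‖lamstar‖ + 1) ^ 2 :=
    mul_le_mul_of_nonneg_left (pow_le_pow_left₀ (norm_nonneg _) hμ_norm 2)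
      (div_nonneg (mul_nonneg (hγ 0) (hτ 0).le) zero_le_two)
  rw [← hρ_inner]
  linarith [sum_le_sum hkkt]

end IsOpConExRun

end OpConEx

theorem opconex_saddle_point_bound_general
    {nu nv m : ℕ}
    -- product feasible set W = U × V
    (U : Set (Euc nu)) (hUconv : Convex ℝ U)
    (V : Set (Euc nv)) (hVconv : Convex ℝ V)
    (W : Set (WithLp 2 (Euc nu × Euc nv)))
    (hW : W = {w : WithLp 2 (Euc nu × Euc nv) | w.ofLp.1 ∈ U ∧ w.ofLp.2 ∈ V})
    -- convex-concave objective and its partial gradients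
    (f : Euc nu → Euc nv → ℝ) (Fu : Euc nu → Euc nv → Euc nu) (Fv : Euc nu → Euc nv → Euc nv)
    (hfconv : ∀ v ∈ V, ∀ u ∈ U, ∀ u' ∈ U, f u v + ⟪Fu u v, u' - u⟫_ℝ ≤ f u' v)
    (hfconc : ∀ u ∈ U, ∀ v ∈ V, ∀ v' ∈ V, f u v' ≤ f u v + ⟪Fv u v, v' - v⟫_ℝ)
    -- the monotone operator F(w) = (∇_u f(u,v), −∇_v f(u,v))
    (F : WithLp 2 (Euc nu × Euc nv) → WithLp 2 (Euc nu × Euc nv))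
    (hF : ∀ w, F w = (WithLp.equiv 2 (Euc nu × Euc nv)).symm (Fu w.ofLp.1 w.ofLp.2, -Fv w.ofLp.1 w.ofLp.2))
    (hFmono : ∀ w₁ ∈ W, ∀ w₂ ∈ W, 0 ≤ ⟪F w₁ - F w₂, w₁ - w₂⟫_ℝ)
    -- jointly convex coupling constraints
    (g : WithLp 2 (Euc nu × Euc nv) → Euc m)
    (Gg : WithLp 2 (Euc nu × Euc nv) → Fin m → WithLp 2 (Euc nu × Euc nv))
    (Lg Hg : ℝ)
    (hgconv : ∀ w ∈ W, ∀ w' ∈ W, ∀ j, g w j + ⟪Gg w j, w' - w⟫_ℝ ≤ g w' j)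
    (hgsmooth : ∀ w₁ ∈ W, ∀ w₂ ∈ W,
      ‖g w₁ - g w₂ - gradT (Gg w₂) (w₁ - w₂)‖ ≤ Lg / 2 * ‖w₁ - w₂‖ ^ 2 + Hg * ‖w₁ - w₂‖)
    -- KKT pair
    (wstar : WithLp 2 (Euc nu × Euc nv)) (lamstar : Euc m)
    (hwstar : wstar ∈ W) (hlamstar : ∀ j, 0 ≤ lamstar j)
    (hsaddle₁ : ∀ w ∈ W,
      ⟪F wstar, wstar⟫_ℝ + ⟪lamstar, g wstar⟫_ℝ ≤ ⟪F wstar, w⟫_ℝ + ⟪lamstar, g w⟫_ℝ)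
    (hsaddle₂ : ∀ lam' : Euc m, (∀ j, 0 ≤ lam' j) →
      ⟪lam', g wstar⟫_ℝ ≤ ⟪lamstar, g wstar⟫_ℝ)
    -- horizon, step sizes and condition (C)
    (T : ℕ) (hT : 1 ≤ T)
    (γ η τ θ : ℕ → ℝ)
    (hγ : ∀ t, 0 < γ t) (hη : ∀ t, 0 < η t) (hτ : ∀ t, 0 < τ t)
    (hC₁ : ∀ t, γ (t + 1) * η (t + 1) ≤ γ t * η t)
    (hC₂ : ∀ t, γ (t + 1) * τ (t + 1) ≤ γ t * τ t)
    (hC₃ : ∀ t, γ (t + 1) * θ (t + 1) = γ t)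
    -- OpConEx iterates on W
    (w wm : ℕ → WithLp 2 (Euc nu × Euc nv)) (lam : ℕ → Euc m) (ell ellm : ℕ → Euc m)
    (hw0 : w 0 ∈ W) (hwm0 : wm 0 = w 0) (hwm : ∀ t, wm (t + 1) = w t)
    (hlam0 : lam 0 = 0)
    (hell0 : ell 0 = g (w 0))
    (hell : ∀ t, ell (t + 1) = g (w t) + gradT (Gg (w t)) (w (t + 1) - w t))
    (hellm0 : ellm 0 = g (w 0)) (hellm : ∀ t, ellm (t + 1) = ell t)
    (hlamPos : ∀ t, ∀ j, 0 ≤ lam (t + 1) j)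
    (hlamMin : ∀ t, ∀ lam' : Euc m, (∀ j, 0 ≤ lam' j) →
      ⟪-((1 + θ t) • ell t - θ t • ellm t), lam (t + 1)⟫_ℝ
          + τ t / 2 * ‖lam (t + 1) - lam t‖ ^ 2
        ≤ ⟪-((1 + θ t) • ell t - θ t • ellm t), lam'⟫_ℝ
          + τ t / 2 * ‖lam' - lam t‖ ^ 2)
    (hwS : ∀ t, w (t + 1) ∈ W)
    (hwMin : ∀ t, ∀ y ∈ W,
      ⟪(1 + θ t) • F (w t) - θ t • F (wm t) + gradMul (Gg (w t)) (lam (t + 1)),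
          w (t + 1)⟫_ℝ + η t / 2 * ‖w (t + 1) - w t‖ ^ 2
        ≤ ⟪(1 + θ t) • F (w t) - θ t • F (wm t) + gradMul (Gg (w t)) (lam (t + 1)),
          y⟫_ℝ + η t / 2 * ‖y - w t‖ ^ 2) :
    -- (i) gap bound over the feasible set W̃, (ii) infeasibility bound
    (∀ z ∈ W, (∀ j, g z j ≤ 0) →
      f (((∑ t ∈ Finset.range T, γ t)⁻¹ • (∑ t ∈ Finset.range T, γ t • w (t + 1))).ofLp.1) z.ofLp.2
          - f z.ofLp.1 (((∑ t ∈ Finset.range T, γ t)⁻¹ • (∑ t ∈ Finset.range T, γ t • w (t + 1))).ofLp.2)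
        ≤ (∑ t ∈ Finset.range T, γ t)⁻¹ *
            (γ 0 * η 0 / 2 * ‖z - w 0‖ ^ 2
              + opconexMT γ η τ θ Lg Hg F w wm lam ell ellm T 0))
    ∧ ‖posPart (g ((∑ t ∈ Finset.range T, γ t)⁻¹ • (∑ t ∈ Finset.range T, γ t • w (t + 1))))‖
        ≤ (∑ t ∈ Finset.range T, γ t)⁻¹ *
            (γ 0 * η 0 / 2 * ‖wstar - w 0‖ ^ 2 + γ 0 * τ 0 / 2 * (‖lamstar‖ + 1) ^ 2
              + opconexMT γ η τ θ Lg Hg F w wm lam ell ellm T (‖lamstar‖ + 1)) := by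
  have hWconv : Convex ℝ W := by
    rw [hW]
    exact (hUconv.prod hVconv).linear_preimage (WithLp.linearEquiv 2 ℝ _).toLinearMap
  have hUV : ∀ {z}, z ∈ W → z.ofLp.1 ∈ U ∧ z.ofLp.2 ∈ V := fun hz => by rwa [hW] at hz
  have run : IsOpConExRun W F g Gg η τ θ w wm lam ell ellm :=
    ⟨fun t => t.casesOn hw0 hwS, hwm0, hwm, hlam0, hell0, hell, hellm0, hellm, hlamPos, hlamMin,
      hwMin⟩
  have hγ₀ : ∀ t, 0 ≤ γ t := fun t => (hγ t).le
  have hΓ : 0 < ∑ t ∈ range T, γ t :=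
    sum_pos (fun t _ => hγ t) (nonempty_range_iff.2 (by omega))
  refine ⟨fun z hz hgz => ?_, ?_⟩
  · rw [le_inv_mul_iff₀ hΓ]
    exact (sum_mul_gap_centerMass_le hUconv hVconv hfconv hfconc hF (fun t _ => hγ₀ t) hΓ
      (fun t _ => (hUV (hwS t)).1) (fun t _ => (hUV (hwS t)).2) (hUV hz).1 (hUV hz).2).trans
      (run.sum_inner_le_of_feasible hWconv hgconv hgsmooth hγ₀ hη hτ hC₁ hC₂ hC₃ (by omega) hz
        hgz)
  · rw [le_inv_mul_iff₀ hΓ]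
    exact run.mul_norm_posPart_centerMass_le hWconv hgconv hgsmooth hγ₀ hη hτ hC₁ hC₂ hC₃ hFmono
      hwstar hlamstar hsaddle₁ hsaddle₂ hΓ

/-- **Lemma 6.1 of the paper.** Primal-dual gap and infeasibility bounds for the
OpConEx method applied to convex-concave saddle point problems with coupling
function constraints. -/
theorem opconex_saddle_point_bound
    {nu nv m : ℕ}
    -- product feasible set W = U × V
    (U : Set (Euc nu)) (hUne : U.Nonempty) (hUcomp : IsCompact U) (hUconv : Convex ℝ U)
    (V : Set (Euc nv)) (hVne : V.Nonempty) (hVcomp : IsCompact V) (hVconv : Convex ℝ V)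
    (W : Set (WithLp 2 (Euc nu × Euc nv)))
    (hW : W = {w : WithLp 2 (Euc nu × Euc nv) | w.ofLp.1 ∈ U ∧ w.ofLp.2 ∈ V})
    -- convex-concave objective and its partial gradients
    (f : Euc nu → Euc nv → ℝ) (Fu : Euc nu → Euc nv → Euc nu) (Fv : Euc nu → Euc nv → Euc nv)
    (hfconv : ∀ v ∈ V, ∀ u ∈ U, ∀ u' ∈ U, f u v + ⟪Fu u v, u' - u⟫_ℝ ≤ f u' v)
    (hfconc : ∀ u ∈ U, ∀ v ∈ V, ∀ v' ∈ V, f u v' ≤ f u v + ⟪Fv u v, v' - v⟫_ℝ)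
    -- the monotone operator F(w) = (∇_u f(u,v), −∇_v f(u,v))
    (F : WithLp 2 (Euc nu × Euc nv) → WithLp 2 (Euc nu × Euc nv))
    (hF : ∀ w, F w = (WithLp.equiv 2 (Euc nu × Euc nv)).symm (Fu w.ofLp.1 w.ofLp.2, -Fv w.ofLp.1 w.ofLp.2))
    (L H : ℝ) (hL : 0 ≤ L) (hH : 0 ≤ H)
    (hFmono : ∀ w₁ ∈ W, ∀ w₂ ∈ W, 0 ≤ ⟪F w₁ - F w₂, w₁ - w₂⟫_ℝ)
    (hFlip : ∀ w₁ ∈ W, ∀ w₂ ∈ W, ‖F w₁ - F w₂‖ ≤ L * ‖w₁ - w₂‖ + H)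
    -- jointly convex coupling constraints
    (g : WithLp 2 (Euc nu × Euc nv) → Euc m)
    (Gg : WithLp 2 (Euc nu × Euc nv) → Fin m → WithLp 2 (Euc nu × Euc nv))
    (Mg Lg Hg : ℝ) (hMg : 0 ≤ Mg) (hLg : 0 ≤ Lg) (hHg : 0 ≤ Hg)
    (hgconv : ∀ w ∈ W, ∀ w' ∈ W, ∀ j, g w j + ⟪Gg w j, w' - w⟫_ℝ ≤ g w' j)
    (hglip : ∀ w₁ ∈ W, ∀ w₂ ∈ W, ‖g w₁ - g w₂‖ ≤ Mg * ‖w₁ - w₂‖)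
    (hGgbd : ∀ w ∈ W, ∀ μ : Euc m, ‖gradMul (Gg w) μ‖ ≤ Mg * ‖μ‖)
    (hgsmooth : ∀ w₁ ∈ W, ∀ w₂ ∈ W,
      ‖g w₁ - g w₂ - gradT (Gg w₂) (w₁ - w₂)‖ ≤ Lg / 2 * ‖w₁ - w₂‖ ^ 2 + Hg * ‖w₁ - w₂‖)
    (hWtne : ∃ w ∈ W, ∀ j, g w j ≤ 0)
    -- KKT pair
    (wstar : WithLp 2 (Euc nu × Euc nv)) (lamstar : Euc m)
    (hwstar : wstar ∈ W) (hlamstar : ∀ j, 0 ≤ lamstar j)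
    (hsaddle₁ : ∀ w ∈ W,
      ⟪F wstar, wstar⟫_ℝ + ⟪lamstar, g wstar⟫_ℝ ≤ ⟪F wstar, w⟫_ℝ + ⟪lamstar, g w⟫_ℝ)
    (hsaddle₂ : ∀ lam' : Euc m, (∀ j, 0 ≤ lam' j) →
      ⟪lam', g wstar⟫_ℝ ≤ ⟪lamstar, g wstar⟫_ℝ)
    -- horizon, step sizes and condition (C)
    (T : ℕ) (hT : 1 ≤ T)
    (γ η τ θ : ℕ → ℝ)
    (hγ : ∀ t, 0 < γ t) (hη : ∀ t, 0 < η t) (hτ : ∀ t, 0 < τ t) (hθ : ∀ t, 0 ≤ θ t)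
    (hC₁ : ∀ t, γ (t + 1) * η (t + 1) ≤ γ t * η t)
    (hC₂ : ∀ t, γ (t + 1) * τ (t + 1) ≤ γ t * τ t)
    (hC₃ : ∀ t, γ (t + 1) * θ (t + 1) = γ t)
    -- OpConEx iterates on W
    (w wm : ℕ → WithLp 2 (Euc nu × Euc nv)) (lam : ℕ → Euc m) (ell ellm : ℕ → Euc m)
    (hw0 : w 0 ∈ W) (hwm0 : wm 0 = w 0) (hwm : ∀ t, wm (t + 1) = w t)
    (hlam0 : lam 0 = 0)
    (hell0 : ell 0 = g (w 0))
    (hell : ∀ t, ell (t + 1) = g (w t) + gradT (Gg (w t)) (w (t + 1) - w t))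
    (hellm0 : ellm 0 = g (w 0)) (hellm : ∀ t, ellm (t + 1) = ell t)
    (hlamPos : ∀ t, ∀ j, 0 ≤ lam (t + 1) j)
    (hlamMin : ∀ t, ∀ lam' : Euc m, (∀ j, 0 ≤ lam' j) →
      ⟪-((1 + θ t) • ell t - θ t • ellm t), lam (t + 1)⟫_ℝ
          + τ t / 2 * ‖lam (t + 1) - lam t‖ ^ 2
        ≤ ⟪-((1 + θ t) • ell t - θ t • ellm t), lam'⟫_ℝ
          + τ t / 2 * ‖lam' - lam t‖ ^ 2)
    (hwS : ∀ t, w (t + 1) ∈ W)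
    (hwMin : ∀ t, ∀ y ∈ W,
      ⟪(1 + θ t) • F (w t) - θ t • F (wm t) + gradMul (Gg (w t)) (lam (t + 1)),
          w (t + 1)⟫_ℝ + η t / 2 * ‖w (t + 1) - w t‖ ^ 2
        ≤ ⟪(1 + θ t) • F (w t) - θ t • F (wm t) + gradMul (Gg (w t)) (lam (t + 1)),
          y⟫_ℝ + η t / 2 * ‖y - w t‖ ^ 2) :
    -- (i) gap bound over the feasible set W̃, (ii) infeasibility bound
    (∀ z ∈ W, (∀ j, g z j ≤ 0) →
      f (((∑ t ∈ Finset.range T, γ t)⁻¹ • (∑ t ∈ Finset.range T, γ t • w (t + 1))).ofLp.1) z.ofLp.2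
          - f z.ofLp.1 (((∑ t ∈ Finset.range T, γ t)⁻¹ • (∑ t ∈ Finset.range T, γ t • w (t + 1))).ofLp.2)
        ≤ (∑ t ∈ Finset.range T, γ t)⁻¹ *
            (γ 0 * η 0 / 2 * ‖z - w 0‖ ^ 2
              + opconexMT γ η τ θ Lg Hg F w wm lam ell ellm T 0))
    ∧ ‖posPart (g ((∑ t ∈ Finset.range T, γ t)⁻¹ • (∑ t ∈ Finset.range T, γ t • w (t + 1))))‖
        ≤ (∑ t ∈ Finset.range T, γ t)⁻¹ *
            (γ 0 * η 0 / 2 * ‖wstar - w 0‖ ^ 2 + γ 0 * τ 0 / 2 * (‖lamstar‖ + 1) ^ 2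
              + opconexMT γ η τ θ Lg Hg F w wm lam ell ellm T (‖lamstar‖ + 1)) :=
  opconex_saddle_point_bound_general U hUconv V hVconv W hW f Fu Fv hfconv hfconc F hF hFmono g Gg
    Lg Hg hgconv hgsmooth wstar lamstar hwstar hlamstar hsaddle₁ hsaddle₂ T hT γ η τ θ hγ hη hτ hC₁
    hC₂ hC₃ w wm lam ell ellm hw0 hwm0 hwm hlam0 hell0 hell hellm0 hellm hlamPos hlamMin hwS hwMin

end
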